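/- arXiv:1903.07135 — 2 statements merged into one kernel-verified Lean document; each statement's English description precedes it below -/
import Mathlib

section
/- Let ρ ≥ 0 and I > 0 be reals and let β ∈ ℂ; set S := ρ² |β|² + I. Then the infimum over u ∈ ℂ and w ∈ (0, ∞) of w · ( |u|² S − 2 ρ Re(u β) + 1 ) − ln w equals 1 − ln(1 + ρ² |β|² / I), and this infimum is attained at u = ρ · conj(β) / S and w = S / I. -/
/-- per-user core of Theorem 3: for `ρ ≥ 0`, `I > 0`, `β ∈ ℂ` and
`S = ρ²|β|² + I`, the infimum over `u ∈ ℂ` and `w > 0` of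
`w (|u|² S − 2 ρ Re(u β) + 1) − ln w` equals `1 − ln(1 + ρ²|β|²/I)`, attained at
`u = ρ conj(β)/S` and `w = S/I`. -/
theorem weighted_mmse_equals_rate (ρ : ℝ) (hρ : 0 ≤ ρ) (I : ℝ) (hI : 0 < I)
    (β : ℂ) (S : ℝ) (hS : S = ρ^2 * ‖β‖^2 + I) :
    IsLeast
      {r : ℝ | ∃ u : ℂ, ∃ w : ℝ, 0 < w ∧
        r = w * (‖u‖^2 * S - 2 * ρ * (u * β).re + 1) - Real.log w}
      (1 - Real.log (1 + ρ^2 * ‖β‖^2 / I)) ∧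
    (S/I) * (‖(ρ : ℂ) * (starRingEnd ℂ) β / S‖^2 * S
          - 2 * ρ * (((ρ : ℂ) * (starRingEnd ℂ) β / S) * β).re + 1)
        - Real.log (S/I)
      = 1 - Real.log (1 + ρ^2 * ‖β‖^2 / I) := by
  have hA : 0 ≤ ρ^2 * ‖β‖^2 := by positivity
  have hSpos : 0 < S := by rw [hS]; linarith
  have hSI : 1 + ρ^2 * ‖β‖^2 / I = S / I := by
    field_simp [hS]; rw [hS]; ring
  have habs : ‖(ρ : ℂ) * (starRingEnd ℂ) β / S‖
      = ρ * ‖β‖ / S := by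
    simp [norm_div, norm_mul, Complex.norm_real, Complex.norm_conj,
      Real.norm_eq_abs, abs_of_nonneg hρ, abs_of_pos hSpos]
  have hre : (((ρ : ℂ) * (starRingEnd ℂ) β / S) * β).re
      = ρ * ‖β‖^2 / S := by
    have h2 : ((ρ : ℂ) * (starRingEnd ℂ) β / S) * β
        = ((ρ * ‖β‖^2 / S : ℝ) : ℂ) := by
      rw [div_mul_eq_mul_div, mul_assoc]
      rw [show (starRingEnd ℂ) β * β = ((‖β‖ ^ 2 : ℝ) : ℂ) by
        rw [Complex.conj_mul']; push_cast; rfl]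
      push_cast
      ring
    rw [h2, Complex.ofReal_re]
  have key : (S/I) * (‖(ρ : ℂ) * (starRingEnd ℂ) β / S‖^2 * S
          - 2 * ρ * (((ρ : ℂ) * (starRingEnd ℂ) β / S) * β).re + 1)
        - Real.log (S/I)
      = 1 - Real.log (1 + ρ^2 * ‖β‖^2 / I) := by
    rw [habs, hre, hSI]
    have h3 : (ρ * ‖β‖ / S)^2 * S - 2 * ρ * (ρ * ‖β‖^2 / S) + 1
        = I / S := by
      rw [hS]
      have hS' : (ρ^2 * ‖β‖^2 + I) ≠ 0 := by positivity
      field_simp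
      ring
    rw [h3]
    have : (S/I) * (I/S) = 1 := by field_simp
    rw [this]
  refine ⟨⟨⟨(ρ : ℂ) * (starRingEnd ℂ) β / S, S/I, by positivity, key.symm⟩, ?_⟩, key⟩
  rintro r ⟨u, w, hw, rfl⟩
  set a := ‖β‖ with ha
  set t := ‖u‖ with ht
  have ht0 : 0 ≤ t := norm_nonneg u
  have hre2 : (u * β).re ≤ t * a := by
    calc (u * β).re ≤ ‖u * β‖ := Complex.re_le_norm _
    _ = t * a := by rw [norm_mul]
  have he : I / S ≤ t^2 * S - 2 * ρ * (u*β).re + 1 := by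
    rw [div_le_iff₀ hSpos]
    nlinarith [sq_nonneg (t*S - ρ*a),
      mul_le_mul_of_nonneg_right (mul_le_mul_of_nonneg_left hre2 hρ) hSpos.le]
  have hIS : 0 < I / S := div_pos hI hSpos
  have hlog := Real.log_le_sub_one_of_pos (mul_pos hw hIS)
  rw [Real.log_mul hw.ne' hIS.ne'] at hlog
  have hlogIS : Real.log (I/S) = - Real.log (S/I) := by
    rw [Real.log_div hI.ne' hSpos.ne', Real.log_div hSpos.ne' hI.ne']; ring
  have hmul := mul_le_mul_of_nonneg_left he hw.le
  rw [hSI]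
  linarith [hlog, hmul]
end

section
/- Fix integers L ≥ 1, K ≥ 1. Suppose given complex coefficients b_{l',k}^{l''} ∈ ℂ (write b_{l',k} := (b_{l',k}^1,…,b_{l',k}^L) ∈ ℂ^L), nonnegative reals c_{l'',k}^{l',k'}, positive reals d_{l',k}, and positive reals P_{max,l,k}, for all indices l, l', l'' ∈ {1,…,L} and k, k' ∈ {1,…,K}. For ρ = (ρ_{l,k}) ∈ ℝ^{L×K} and a = (a_{l,k}) with each a_{l,k} ∈ ℂ^L, define D_{l,k}(ρ,a) := ∑_{l'≠l} ρ_{l',k}² |a_{l,k}^H b_{l',k}|² + ∑_{l'=1}^L ∑_{k'=1}^K ∑_{l''=1}^L ρ_{l',k'}² |a_{l,k}^{l''}|² c_{l'',k}^{l',k'} + ∑_{l'=1}^L |a_{l,k}^{l'}|² d_{l',k}, SINR_{l,k}(ρ,a) := ρ_{l,k}² |a_{l,k}^H b_{l,k}|² / D_{l,k}(ρ,a), and for u = (u_{l,k}) ∈ ℂ^{L×K}, e_{l,k}(ρ,a,u) := |u_{l,k}|² ( ρ_{l,k}² |a_{l,k}^H b_{l,k}|² + D_{l,k}(ρ,a)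 ) − 2 ρ_{l,k} Re( u_{l,k} · (a_{l,k}^H b_{l,k}) ) + 1. Let F := { (ρ,a) : 0 ≤ ρ_{l,k} ≤ √P_{max,l,k} and a_{l,k} ≠ 0 for all l,k }. Then a point (ρ*, a*) ∈ F maximizes G(ρ,a) := ∑_{l,k} ln(1 + SINR_{l,k}(ρ,a)) over F if and only if there exist u* ∈ ℂ^{L×K} and w* ∈ (0,∞)^{L×K} such that (ρ*, a*, u*, w*) minimizes H(ρ,a,u,w) := ∑_{l,k} ( w_{l,k} · e_{l,k}(ρ,a,u) − ln w_{l,k} ) over F × ℂ^{L×K} × (0,∞)^{L×K}; moreover, in that case min H = L·K − max G. -/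
private lemma log_weight_bound {E w : ℝ} (hE : 0 < E) (hw : 0 < w) :
    1 + Real.log E ≤ w * E - Real.log w := by
  have h := Real.log_le_sub_one_of_pos (mul_pos hw hE)
  rw [Real.log_mul hw.ne' hE.ne'] at h
  linarith

private lemma quad_bound (p Dv : ℝ) (hD : 0 < Dv) (v u : ℂ) :
    Dv / (p^2 * (‖v‖)^2 + Dv) ≤
      (‖u‖)^2 * (p^2 * (‖v‖)^2 + Dv) - 2 * p * (u * v).re + 1 := by
  have hT : 0 < p^2 * (‖v‖)^2 + Dv := by positivity
  rw [div_le_iff₀ hT]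
  simp only [Complex.sq_norm, Complex.normSq_apply, Complex.mul_re]
  nlinarith [sq_nonneg ((p^2*(v.re*v.re+v.im*v.im)+Dv)*u.re - p*v.re),
    sq_nonneg ((p^2*(v.re*v.re+v.im*v.im)+Dv)*u.im + p*v.im)]

private lemma pointwise_lower (p Dv : ℝ) (hD : 0 < Dv) (v u : ℂ) (w : ℝ) (hw : 0 < w) :
    1 - Real.log (1 + p^2 * (‖v‖)^2 / Dv) ≤
      w * ((‖u‖)^2 * (p^2*(‖v‖)^2 + Dv) - 2*p*(u*v).re + 1)
        - Real.log w := by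
  have hT : 0 < p^2*(‖v‖)^2 + Dv := by positivity
  have h1 := quad_bound p Dv hD v u
  have hE : 0 < Dv / (p^2*(‖v‖)^2+Dv) := by positivity
  have h2 := log_weight_bound hE hw
  have h3 : Real.log (Dv / (p^2*(‖v‖)^2+Dv))
      = - Real.log (1 + p^2*(‖v‖)^2/Dv) := by
    rw [show (1 + p^2*(‖v‖)^2/Dv) = (p^2*(‖v‖)^2+Dv)/Dv by
      field_simp; ring]
    rw [Real.log_div hD.ne' hT.ne', Real.log_div hT.ne' hD.ne']
    ring
  nlinarith [mul_le_mul_of_nonneg_left h1 hw.le]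

private lemma pointwise_eq (p Dv : ℝ) (hD : 0 < Dv) (v : ℂ) :
    ∃ u : ℂ, ∃ w : ℝ, 0 < w ∧
      w * ((‖u‖)^2 * (p^2*(‖v‖)^2 + Dv) - 2*p*(u*v).re + 1)
          - Real.log w
        = 1 - Real.log (1 + p^2*(‖v‖)^2/Dv) := by
  have hT : 0 < p^2*(‖v‖)^2 + Dv := by positivity
  set T := p^2*(‖v‖)^2 + Dv with hTdef
  refine ⟨((p/T : ℝ):ℂ) * (starRingEnd ℂ) v, 1 + p^2*(‖v‖)^2/Dv,
    by positivity, ?_⟩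
  have habs : (‖((p/T : ℝ):ℂ) * (starRingEnd ℂ) v‖)^2
      = (p/T)^2 * (‖v‖)^2 := by
    rw [norm_mul, mul_pow, Complex.norm_conj, Complex.sq_norm, Complex.normSq_ofReal]
    ring
  have hre : ((((p/T : ℝ):ℂ) * (starRingEnd ℂ) v) * v).re
      = (p/T) * (‖v‖)^2 := by
    rw [mul_assoc, mul_comm ((starRingEnd ℂ) v) v, Complex.mul_conj]
    rw [← Complex.ofReal_mul, Complex.ofReal_re, Complex.sq_norm]
  rw [habs, hre]
  have hee : (p/T)^2 * (‖v‖)^2 * T - 2*p*((p/T) * (‖v‖)^2) + 1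
      = Dv / T := by
    field_simp
    ring
  rw [hee]
  have hw1 : (1 + p^2*(‖v‖)^2/Dv) = T / Dv := by
    rw [hTdef]; field_simp; ring
  rw [hw1]
  have : T / Dv * (Dv / T) = 1 := by
    field_simp
  rw [this]


/-- Theorem 3 of the paper: the sum spectral efficiency maximization
over feasible square-root powers `ρ` and nonzero LSFD vectors `a` is equivalent to
the weighted MMSE minimization over `(ρ, a, u, w)`: a feasible `(ρ*, a*)` maximizes
`G(ρ,a) = ∑_{l,k} ln(1 + SINR_{l,k}(ρ,a))` iff there exist `u*` and positive weights
`w*` such that `(ρ*, a*, u*, w*)` minimizes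
`H(ρ,a,u,w) = ∑_{l,k} (w_{l,k} e_{l,k}(ρ,a,u) − ln w_{l,k})`, and then
`min H = L·K − max G`. -/
theorem sum_se_weighted_mmse_equivalence (L K : ℕ) (hL : 1 ≤ L) (hK : 1 ≤ K)
    (b : Fin L → Fin K → (Fin L → ℂ))
    (c : Fin L → Fin K → Fin L → Fin K → ℝ)
    (hc : ∀ l'' k l' k', 0 ≤ c l'' k l' k')
    (d : Fin L → Fin K → ℝ) (hd : ∀ l' k, 0 < d l' k)
    (Pmax : Fin L → Fin K → ℝ) (hPmax : ∀ l k, 0 < Pmax l k)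
    (D : (Fin L → Fin K → ℝ) → (Fin L → Fin K → (Fin L → ℂ)) → Fin L → Fin K → ℝ)
    (hD : ∀ ρ a l k, D ρ a l k =
      (∑ l' ∈ Finset.univ.erase l, (ρ l' k)^2 *
          (‖∑ i, (starRingEnd ℂ) (a l k i) * b l' k i‖)^2)
      + (∑ l', ∑ k', ∑ l'', (ρ l' k')^2 *
          (‖a l k l''‖)^2 * c l'' k l' k')
      + (∑ l', (‖a l k l'‖)^2 * d l' k))
    (SINR : (Fin L → Fin K → ℝ) → (Fin L → Fin K → (Fin L → ℂ)) → Fin L → Fin K → ℝ)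
    (hSINR : ∀ ρ a l k, SINR ρ a l k =
      (ρ l k)^2 * (‖∑ i, (starRingEnd ℂ) (a l k i) * b l k i‖)^2
        / D ρ a l k)
    (e : (Fin L → Fin K → ℝ) → (Fin L → Fin K → (Fin L → ℂ)) →
          (Fin L → Fin K → ℂ) → Fin L → Fin K → ℝ)
    (he : ∀ ρ a u l k, e ρ a u l k =
      (‖u l k‖)^2 *
        ((ρ l k)^2 * (‖∑ i, (starRingEnd ℂ) (a l k i) * b l k i‖)^2
          + D ρ a l k)
      - 2 * ρ l k * (u l k * (∑ i, (starRingEnd ℂ) (a l k i) * b l k i)).re + 1)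
    (F : (Fin L → Fin K → ℝ) → (Fin L → Fin K → (Fin L → ℂ)) → Prop)
    (hF : ∀ ρ a, F ρ a ↔
      ∀ l k, 0 ≤ ρ l k ∧ ρ l k ≤ Real.sqrt (Pmax l k) ∧ a l k ≠ 0)
    (G : (Fin L → Fin K → ℝ) → (Fin L → Fin K → (Fin L → ℂ)) → ℝ)
    (hG : ∀ ρ a, G ρ a = ∑ l, ∑ k, Real.log (1 + SINR ρ a l k))
    (H : (Fin L → Fin K → ℝ) → (Fin L → Fin K → (Fin L → ℂ)) →
          (Fin L → Fin K → ℂ) → (Fin L → Fin K → ℝ) → ℝ)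
    (hH : ∀ ρ a u w, H ρ a u w =
      ∑ l, ∑ k, (w l k * e ρ a u l k - Real.log (w l k)))
    (ρs : Fin L → Fin K → ℝ) (as : Fin L → Fin K → (Fin L → ℂ))
    (hmem : F ρs as) :
    (∀ ρ a, F ρ a → G ρ a ≤ G ρs as)
    ↔ (∃ u : Fin L → Fin K → ℂ, ∃ w : Fin L → Fin K → ℝ,
        (∀ l k, 0 < w l k) ∧
        (∀ ρ a u' w', F ρ a → (∀ l k, 0 < w' l k) →
          H ρs as u w ≤ H ρ a u' w') ∧
        H ρs as u w = (L : ℝ) * K - G ρs as) := by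
  classical
  -- positivity of D on the feasible set
  have hDpos : ∀ ρ a, F ρ a → ∀ l k, 0 < D ρ a l k := by
    intro ρ a hFa l k
    obtain ⟨-, -, ha⟩ := (hF ρ a).1 hFa l k
    rw [hD]
    have h3 : 0 < ∑ l', (‖a l k l'‖)^2 * d l' k := by
      obtain ⟨i, hi⟩ := Function.ne_iff.mp ha
      refine Finset.sum_pos' (fun j _ => mul_nonneg (sq_nonneg _) (hd j k).le) ⟨i, Finset.mem_univ i, ?_⟩
      have hip : 0 < ‖a l k i‖ := by
        simpa [AbsoluteValue.pos_iff] using hi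
      exact mul_pos (pow_pos hip 2) (hd i k)
    have h1 : 0 ≤ ∑ l' ∈ Finset.univ.erase l, (ρ l' k)^2 *
        (‖∑ i, (starRingEnd ℂ) (a l k i) * b l' k i‖)^2 :=
      Finset.sum_nonneg fun _ _ => mul_nonneg (sq_nonneg _) (sq_nonneg _)
    have h2 : 0 ≤ ∑ l', ∑ k', ∑ l'', (ρ l' k')^2 *
        (‖a l k l''‖)^2 * c l'' k l' k' := by
      refine Finset.sum_nonneg fun l' _ => Finset.sum_nonneg fun k' _ =>
        Finset.sum_nonneg fun l'' _ => ?_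
      exact mul_nonneg (mul_nonneg (sq_nonneg _) (sq_nonneg _)) (hc l'' k l' k')
    linarith
  have hconst : ∑ _l : Fin L, ∑ _k : Fin K, (1:ℝ) = (L:ℝ)*K := by
    simp [Finset.card_univ]
  -- lower bound: H ≥ L*K - G on the feasible set
  have lower : ∀ ρ a u w, F ρ a → (∀ l k, 0 < w l k) →
      (L:ℝ)*K - G ρ a ≤ H ρ a u w := by
    intro ρ a u w hFa hw
    rw [hG, hH]
    have hstep : ∑ l : Fin L, ∑ k : Fin K, (1 - Real.log (1 + SINR ρ a l k)) ≤
        ∑ l, ∑ k, (w l k * e ρ a u l k - Real.log (w l k)) := by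
      refine Finset.sum_le_sum fun l _ => Finset.sum_le_sum fun k _ => ?_
      rw [hSINR, he]
      exact pointwise_lower (ρ l k) (D ρ a l k) (hDpos ρ a hFa l k) _ (u l k)
        (w l k) (hw l k)
    calc (L:ℝ)*K - ∑ l, ∑ k, Real.log (1 + SINR ρ a l k)
        = ∑ l : Fin L, ∑ k : Fin K, (1 - Real.log (1 + SINR ρ a l k)) := by
          simp only [Finset.sum_sub_distrib, hconst]
      _ ≤ _ := hstep
  -- attainment of the bound
  have upper : ∀ ρ a, F ρ a → ∃ u w, (∀ l k, 0 < w l k) ∧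
      H ρ a u w = (L:ℝ)*K - G ρ a := by
    intro ρ a hFa
    choose u w hw heq using fun (l : Fin L) (k : Fin K) =>
      pointwise_eq (ρ l k) (D ρ a l k) (hDpos ρ a hFa l k)
        (∑ i, (starRingEnd ℂ) (a l k i) * b l k i)
    refine ⟨fun l k => u l k, fun l k => w l k, fun l k => hw l k, ?_⟩
    rw [hH, hG]
    have : ∀ l k, (fun l k => w l k) l k * e ρ a (fun l k => u l k) l k -
        Real.log ((fun l k => w l k) l k) = 1 - Real.log (1 + SINR ρ a l k) := by
      intro l k
      rw [he, hSINR]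
      exact heq l k
    calc ∑ l, ∑ k, ((fun l k => w l k) l k * e ρ a (fun l k => u l k) l k -
          Real.log ((fun l k => w l k) l k))
        = ∑ l : Fin L, ∑ k : Fin K, (1 - Real.log (1 + SINR ρ a l k)) :=
          Finset.sum_congr rfl fun l _ => Finset.sum_congr rfl fun k _ => this l k
      _ = (L:ℝ)*K - ∑ l, ∑ k, Real.log (1 + SINR ρ a l k) := by
          simp only [Finset.sum_sub_distrib, hconst]
  constructor
  · intro hmax
    obtain ⟨u, w, hw, heq⟩ := upper ρs as hmem
    refine ⟨u, w, hw, ?_, heq⟩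
    intro ρ a u' w' hFa hw'
    have h1 := lower ρ a u' w' hFa hw'
    have h2 := hmax ρ a hFa
    rw [heq]
    linarith
  · rintro ⟨u, w, hw, hmin, heq⟩ ρ a hFa
    obtain ⟨u', w', hw', heq'⟩ := upper ρ a hFa
    have h := hmin ρ a u' w' hFa hw'
    rw [heq, heq'] at h
    linarith
end
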